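/- arXiv:2512.24377 — 2 statements merged into one kernel-verified Lean document; each statement's English description precedes it below -/
import Mathlib

section
/- Let x : [0, ∞) → ℝ be a differentiable solution of ẋ = −σ x √(1 − x) with σ > 0 and initial condition x(0) = x₀ ∈ [0, 1). Then for all t ≥ 0, x(t) = 4 c e^{−σt} / (1 + c e^{−σt})², where c = (1 − √(1 − x₀)) / (1 + √(1 − x₀)); in particular x(t) ≤ 4 c e^{−σt}, so x converges to 0 exponentially at rate σ. -/
open Real

/-!
The substitution `v = (1 - √(1 - x)) / (1 + √(1 - x))`, with inverse `x = 4 v / (1 + v)²`,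
turns `ẋ = -σ x √(1 - x)` into the linear equation `v̇ = -σ v`, so `v(t) = v(0) e^{-σt}`.
-/

noncomputable def cayley (s : ℝ) : ℝ := (1 - s) / (1 + s)

lemma hasDerivAt_cayley {s : ℝ} (hs : 1 + s ≠ 0) :
    HasDerivAt cayley (-2 / (1 + s) ^ 2) s := by
  have h : HasDerivAt (fun y => (1 - y) / (1 + y)) ((-1 * (1 + s) - (1 - s) * 1) / (1 + s) ^ 2) s :=
    ((hasDerivAt_id' s).const_sub 1).div ((hasDerivAt_id' s).const_add 1) hs
  exact h.congr_deriv (by ring)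

lemma cayley_nonneg {s : ℝ} (h₀ : 0 ≤ s) (h₁ : s ≤ 1) : 0 ≤ cayley s :=
  div_nonneg (by linarith) (by linarith)

lemma four_mul_cayley_div_sq {s : ℝ} (hs : 1 + s ≠ 0) :
    4 * cayley s / (1 + cayley s) ^ 2 = 1 - s ^ 2 := by
  unfold cayley
  field_simp
  ring

lemma eq_mul_exp_of_hasDerivAt_mul_self {f : ℝ → ℝ} {a : ℝ}
    (hf : ∀ t, 0 ≤ t → HasDerivAt f (a * f t) t) {t : ℝ} (ht : 0 ≤ t) :
    f t = f 0 * exp (a * t) := by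
  set g : ℝ → ℝ := fun s => f s * exp (-(a * s))
  have hg : ∀ s, 0 ≤ s → HasDerivAt g 0 s := fun s hs =>
    ((hf s hs).mul ((hasDerivAt_id' s).const_mul a).neg.exp).congr_deriv (by ring)
  have hconst := constant_of_has_deriv_right_zero (f := g) (a := 0) (b := t)
    (fun s hs => (hg s hs.1).continuousAt.continuousWithinAt)
    (fun s hs => (hg s hs.1).hasDerivWithinAt) t ⟨ht, le_rfl⟩
  simp only [g, mul_zero, neg_zero, exp_zero, mul_one] at hconst
  rw [← hconst, mul_assoc, ← exp_add, neg_add_cancel, exp_zero, mul_one]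

lemma eq_four_mul_div_of_cayley_sqrt_eq {y v : ℝ} (hy : y ≤ 1) (h : cayley √(1 - y) = v) :
    y = 4 * v / (1 + v) ^ 2 := by
  rw [← h, four_mul_cayley_div_sq (by positivity), sq_sqrt (by linarith)]
  ring

lemma four_mul_div_one_add_sq_le {v : ℝ} (hv : 0 ≤ v) : 4 * v / (1 + v) ^ 2 ≤ 4 * v :=
  div_le_self (by positivity) (one_le_pow₀ (by linarith))

lemma hasDerivAt_cayley_sqrt_one_sub {x : ℝ → ℝ} {σ t : ℝ} (hxt : x t < 1)
    (hx : HasDerivAt x (-σ * x t * √(1 - x t)) t) :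
    HasDerivAt (fun s => cayley √(1 - x s)) (-σ * cayley √(1 - x t)) t := by
  set s := √(1 - x t) with hs_def
  have hs : 0 < s := sqrt_pos.mpr (by linarith)
  have hx_eq : x t = 1 - s ^ 2 := by rw [sq_sqrt (by linarith)]; ring
  have hsqrt := (hx.const_sub 1).sqrt (by linarith : 1 - x t ≠ 0)
  refine ((hasDerivAt_cayley (by positivity)).comp t hsqrt).congr_deriv ?_
  rw [← hs_def, hx_eq]
  unfold cayley
  field_simp
  ring

theorem ode_explicit_solution_general (σ : ℝ) (x : ℝ → ℝ) (x₀ : ℝ)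
    (hinit : x 0 = x₀)
    (hrange : ∀ t, 0 ≤ t → 0 ≤ x t ∧ x t < 1)
    (hode : ∀ t, 0 ≤ t → HasDerivAt x (-σ * x t * Real.sqrt (1 - x t)) t) :
    ∀ t, 0 ≤ t →
      x t = 4 * ((1 - Real.sqrt (1 - x₀)) / (1 + Real.sqrt (1 - x₀))) * Real.exp (-σ * t)
              / (1 + ((1 - Real.sqrt (1 - x₀)) / (1 + Real.sqrt (1 - x₀))) * Real.exp (-σ * t)) ^ 2 ∧
      x t ≤ 4 * ((1 - Real.sqrt (1 - x₀)) / (1 + Real.sqrt (1 - x₀))) * Real.exp (-σ * t) := by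
  intro t ht
  have hlin : cayley √(1 - x t) = cayley √(1 - x₀) * exp (-σ * t) := by
    rw [← hinit]
    exact eq_mul_exp_of_hasDerivAt_mul_self
      (fun s hs => hasDerivAt_cayley_sqrt_one_sub (hrange s hs).2 (hode s hs)) ht
  have hc : 0 ≤ cayley √(1 - x₀) := by
    have hx₀ := hinit ▸ hrange 0 le_rfl
    exact cayley_nonneg (sqrt_nonneg _) (sqrt_le_one.mpr (by linarith))
  have hxt := eq_four_mul_div_of_cayley_sqrt_eq (hrange t ht).2.le hlin
  have hbound := hxt.trans_le (four_mul_div_one_add_sq_le (mul_nonneg hc (exp_pos (-σ * t)).le))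
  exact ⟨by simpa only [mul_assoc, cayley] using hxt, by simpa only [mul_assoc, cayley] using hbound⟩

/-- Explicit solution and exponential decay for ẋ = −σ x √(1 − x), x(0) = x₀ ∈ [0,1). -/
theorem ode_explicit_solution (σ : ℝ) (hσ : 0 < σ) (x : ℝ → ℝ) (x₀ : ℝ)
    (hx₀ : 0 ≤ x₀ ∧ x₀ < 1) (hinit : x 0 = x₀)
    (hrange : ∀ t, 0 ≤ t → 0 ≤ x t ∧ x t < 1)
    (hode : ∀ t, 0 ≤ t → HasDerivAt x (-σ * x t * Real.sqrt (1 - x t)) t) :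
    ∀ t, 0 ≤ t →
      x t = 4 * ((1 - Real.sqrt (1 - x₀)) / (1 + Real.sqrt (1 - x₀))) * Real.exp (-σ * t)
              / (1 + ((1 - Real.sqrt (1 - x₀)) / (1 + Real.sqrt (1 - x₀))) * Real.exp (-σ * t)) ^ 2 ∧
      x t ≤ 4 * ((1 - Real.sqrt (1 - x₀)) / (1 + Real.sqrt (1 - x₀))) * Real.exp (-σ * t) :=
  ode_explicit_solution_general σ x x₀ hinit hrange hode
end

section
/- If x : [0, ∞) → [0, 1) is differentiable and satisfies ẋ = −σ x √(1 − x) with σ > 0, then x(t) ≤ 4 e^{−σ t} for all t ≥ 0. -/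
/-!
The substitution `v = (1 - √(1 - x)) / (1 + √(1 - x))` separates the equation: it turns
`ẋ = -σ x √(1 - x)` into the linear equation `v̇ = -σ v`, so `v(t) = v(0) e^{-σt}`.
Since `x = v (1 + √(1 - x))²` with `0 ≤ v ≤ 1` and `√(1 - x) ≤ 1`, this gives `x(t) ≤ 4 e^{-σt}`.
-/

open Real Set

theorem eq_mul_exp_of_hasDerivAt_eq_mul {f : ℝ → ℝ} {c a b : ℝ} (hab : a ≤ b)
    (hf : ∀ s ∈ Icc a b, HasDerivAt f (c * f s) s) :
    f b = f a * exp (c * (b - a)) := by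
  set g : ℝ → ℝ := fun s => f s * exp (-(c * (s - a)))
  have hg : ∀ s ∈ Icc a b, HasDerivAt g 0 s := by
    intro s hs
    have hexp : HasDerivAt (fun s => exp (-(c * (s - a)))) (exp (-(c * (s - a))) * -c) s := by
      simpa using (((hasDerivAt_id s).sub_const a).const_mul c).neg.exp
    exact ((hf s hs).mul hexp).congr_deriv (by ring)
  have hconst : g b = g a :=
    constant_of_has_deriv_right_zero (fun s hs => (hg s hs).continuousAt.continuousWithinAt)
      (fun s hs => (hg s (Ico_subset_Icc_self hs)).hasDerivWithinAt) b ⟨hab, le_rfl⟩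
  simp only [g, sub_self, mul_zero, neg_zero, exp_zero, mul_one] at hconst
  rw [← hconst, mul_assoc, ← exp_add, neg_add_cancel, exp_zero, mul_one]

noncomputable def sqrtOneSubRatio (y : ℝ) : ℝ := (1 - √(1 - y)) / (1 + √(1 - y))

theorem sqrtOneSubRatio_nonneg {y : ℝ} (hy : 0 ≤ y) : 0 ≤ sqrtOneSubRatio y := by
  have : √(1 - y) ≤ 1 := sqrt_le_one.mpr (by linarith)
  unfold sqrtOneSubRatio
  exact div_nonneg (by linarith) (by positivity)

theorem sqrtOneSubRatio_le_one (y : ℝ) : sqrtOneSubRatio y ≤ 1 := by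
  have := sqrt_nonneg (1 - y)
  unfold sqrtOneSubRatio
  rw [div_le_one (by positivity)]
  linarith

theorem sqrtOneSubRatio_mul_sq {y : ℝ} (hy : y ≤ 1) :
    sqrtOneSubRatio y * (1 + √(1 - y)) ^ 2 = y := by
  have hsq : √(1 - y) ^ 2 = 1 - y := sq_sqrt (by linarith)
  have : 1 + √(1 - y) ≠ 0 := by positivity
  unfold sqrtOneSubRatio
  field_simp
  linear_combination -hsq

theorem hasDerivAt_sqrtOneSubRatio {y : ℝ} (hy : y < 1) :
    HasDerivAt sqrtOneSubRatio (1 / (√(1 - y) * (1 + √(1 - y)) ^ 2)) y := by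
  have hpos : 0 < √(1 - y) := sqrt_pos.mpr (by linarith)
  have hsqrt : HasDerivAt (fun y => √(1 - y)) (-1 / (2 * √(1 - y))) y := by
    convert ((hasDerivAt_id' y).const_sub 1).sqrt (by linarith) using 1
  refine ((hsqrt.const_sub 1).div (hsqrt.const_add 1) (by positivity)).congr_deriv ?_
  field_simp
  ring

theorem HasDerivAt.sqrtOneSubRatio_of_ode {x : ℝ → ℝ} {σ t : ℝ}
    (hx : HasDerivAt x (-σ * x t * √(1 - x t)) t) (hlt : x t < 1) :
    HasDerivAt (fun s => sqrtOneSubRatio (x s)) (-σ * sqrtOneSubRatio (x t)) t := by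
  have hpos : 0 < √(1 - x t) := sqrt_pos.mpr (by linarith)
  refine ((hasDerivAt_sqrtOneSubRatio hlt).comp t hx).congr_deriv ?_
  field_simp
  linear_combination σ * sqrtOneSubRatio_mul_sq hlt.le

theorem ode_decay_bound_general (σ : ℝ) (x : ℝ → ℝ)
    (hrange : ∀ t, 0 ≤ t → 0 ≤ x t ∧ x t < 1)
    (hode : ∀ t, 0 ≤ t → HasDerivAt x (-σ * x t * Real.sqrt (1 - x t)) t) :
    ∀ t, 0 ≤ t → x t ≤ 4 * Real.exp (-σ * t) := by
  intro t ht
  have hlinear : sqrtOneSubRatio (x t) = sqrtOneSubRatio (x 0) * exp (-σ * t) := by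
    simpa using eq_mul_exp_of_hasDerivAt_eq_mul (f := fun s => sqrtOneSubRatio (x s)) ht
      fun s hs => (hode s hs.1).sqrtOneSubRatio_of_ode (hrange s hs.1).2
  have hsqrt_le : √(1 - x t) ≤ 1 := sqrt_le_one.mpr (by linarith [(hrange t ht).1])
  calc x t = sqrtOneSubRatio (x t) * (1 + √(1 - x t)) ^ 2 :=
        (sqrtOneSubRatio_mul_sq (hrange t ht).2.le).symm
    _ = sqrtOneSubRatio (x 0) * exp (-σ * t) * (1 + √(1 - x t)) ^ 2 := by rw [hlinear]
    _ ≤ 1 * exp (-σ * t) * (1 + 1) ^ 2 := by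
        have := sqrtOneSubRatio_nonneg (hrange 0 le_rfl).1
        gcongr
        exact sqrtOneSubRatio_le_one _
    _ = 4 * exp (-σ * t) := by ring

/-- A solution of ẋ = −σ x √(1 − x) with values in [0,1) satisfies x(t) ≤ 4 e^{−σt}. -/
theorem ode_decay_bound (σ : ℝ) (hσ : 0 < σ) (x : ℝ → ℝ)
    (hrange : ∀ t, 0 ≤ t → 0 ≤ x t ∧ x t < 1)
    (hode : ∀ t, 0 ≤ t → HasDerivAt x (-σ * x t * Real.sqrt (1 - x t)) t) :
    ∀ t, 0 ≤ t → x t ≤ 4 * Real.exp (-σ * t) :=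
  ode_decay_bound_general σ x hrange hode
end
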